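/- Assume that for all f ∈ P and all g, γ with sp(g) < γ (every element of sp(g) is < γ) one has sp(fg) < v(f) + γ. Then P is a subgroup of F^× (i.e., 1 ∈ P, P is closed under products and inverses). -/

import Mathlib

/-!
A nonzero `f` lies in `P` iff its spectrum `sp f` is `{v f}`. If `sp f` has a point other than
`v f`, truncating `f` at the least such point `γ₀` produces an element `h ∈ P` with
`v (f - h) = γ₀`. For `f = 1` this gives `u ∈ P` with `v u = 0` and `v (1 - u) = γ₀ > 0`, and then
`γ₀ ∈ sp (u * u)`, which the hypothesis forbids since `sp u = {0}`. For `f = g⁻¹` with `g ∈ P` it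
gives `h ∈ P` with `v (1 - h * g) = μ > 0`, hence `μ ∈ sp (h * g)` because `sp 1 = {0}`, again
contradicting the hypothesis. Closure under products is a direct application of it.
-/

lemma WithTop.eq_zero_of_eq_add_self {M : Type*} [AddMonoid M] [IsLeftCancelAdd M]
    {a : WithTop M} (ha : a ≠ ⊤) (h : a = a + a) : a = 0 := by
  lift a to M using ha
  exact_mod_cast left_eq_add.mp (by exact_mod_cast h : a = a + a)

namespace AddValuation

variable {R Γ₀ : Type*} [Ring R] [LinearOrderedAddCommMonoidWithTop Γ₀] (v : AddValuation R Γ₀)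

lemma map_sub_eq_iff_of_lt {x y : R} {c : Γ₀} (h : c < v y) : v (x - y) = c ↔ v x = c := by
  constructor
  · intro hxy
    rw [← sub_add_cancel x y, v.map_add_eq_of_lt_left (hxy ▸ h), hxy]
  · intro hx
    exact hx ▸ v.map_sub_eq_of_lt_left (hx ▸ h)

end AddValuation

section

variable {F Γ : Type*} [Field F] [AddCommGroup Γ] [LinearOrder Γ] [IsOrderedAddMonoid Γ]

/-- `tr f α` is the truncation `f|_α`; the fields are (T1), (T2), (T3), additivity and (T5). -/
structure Truncation (v : AddValuation F (WithTop Γ)) where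
  tr : F → Γ → F
  le_val_sub_tr : ∀ (f : F) (α : Γ), (α : WithTop Γ) ≤ v (f - tr f α)
  tr_eq_zero : ∀ (f : F) (α : Γ), (α : WithTop Γ) ≤ v f → tr f α = 0
  tr_tr_of_lt : ∀ (f : F) (α β : Γ), α < β → tr (tr f α) β = tr f α
  tr_add : ∀ (f g : F) (α : Γ), tr (f + g) α = tr f α + tr g α
  isWF_sp : ∀ f : F, {γ : Γ | v (f - tr f γ) = γ}.IsWF

namespace Truncation

variable {v : AddValuation F (WithTop Γ)} (T : Truncation v)

def sp (f : F) : Set Γ := {γ | v (f - T.tr f γ) = γ}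

def SpMulBound : Prop :=
  ∀ f, (∃ δ, T.sp f = {δ}) → ∀ g (γ : Γ), (∀ β ∈ T.sp g, β < γ) →
    ∀ δ ∈ T.sp (f * g), (δ : WithTop Γ) < v f + γ

variable {T} {f g : F} {a b γ δ : Γ}

lemma mem_sp_iff : γ ∈ T.sp f ↔ v (f - T.tr f γ) = γ := Iff.rfl

lemma tr_eq_of_le_val_sub (h : (γ : WithTop Γ) ≤ v (f - g)) : T.tr f γ = T.tr g γ := by
  have := T.tr_add (f - g) g γ
  rwa [sub_add_cancel, T.tr_eq_zero _ _ h, zero_add] at this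

lemma tr_tr_of_le (h : a ≤ b) : T.tr (T.tr f b) a = T.tr f a := by
  refine tr_eq_of_le_val_sub ?_
  rw [← neg_sub, v.map_neg]
  exact (WithTop.coe_le_coe.2 h).trans (T.le_val_sub_tr f b)

lemma tr_tr_of_ge (h : b ≤ a) : T.tr (T.tr f b) a = T.tr f b := by
  rcases h.eq_or_lt with rfl | hlt
  · exact tr_tr_of_le le_rfl
  · exact T.tr_tr_of_lt f b a hlt

lemma mem_sp_of_val_eq (h : v f = a) : a ∈ T.sp f := by
  rw [mem_sp_iff, T.tr_eq_zero f a h.ge, sub_zero, h]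

lemma val_le_of_mem_sp (h : γ ∈ T.sp f) : v f ≤ γ := by
  by_contra! hlt
  rw [mem_sp_iff, T.tr_eq_zero f γ hlt.le, sub_zero] at h
  exact hlt.ne' h

lemma val_eq_of_sp_eq_singleton (h : T.sp f = {a}) : v f = a := by
  have hf : f ≠ 0 := by
    rintro rfl
    simpa using val_le_of_mem_sp (h ▸ Set.mem_singleton a : a ∈ T.sp 0)
  obtain ⟨b, hb⟩ := WithTop.ne_top_iff_exists.mp (v.ne_top_iff.mpr hf)
  have hba : b ∈ T.sp f := mem_sp_of_val_eq hb.symm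
  rw [h, Set.mem_singleton_iff] at hba
  rw [← hb, hba]

lemma sp_tr (f : F) (b : Γ) : T.sp (T.tr f b) = T.sp f ∩ Set.Iio b := by
  ext a
  rcases lt_or_ge a b with hab | hba
  · have hlt : (a : WithTop Γ) < v (f - T.tr f b) :=
      (WithTop.coe_lt_coe.2 hab).trans_le (T.le_val_sub_tr f b)
    rw [Set.mem_inter_iff, mem_sp_iff, mem_sp_iff, tr_tr_of_le hab.le,
      ← sub_sub_sub_cancel_left (T.tr f a) (T.tr f b) f, v.map_sub_eq_iff_of_lt hlt]
    exact (and_iff_left hab).symm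
  · rw [mem_sp_iff, tr_tr_of_ge hba, sub_self, v.map_zero]
    simp [hba.not_gt]

lemma mem_sp_of_val_sub_eq (h : v (f - g) = γ) (hg : γ ∉ T.sp g) : γ ∈ T.sp f := by
  have hlt : (γ : WithTop Γ) < v (g - T.tr g γ) := (T.le_val_sub_tr g γ).lt_of_ne (Ne.symm hg)
  rw [mem_sp_iff, tr_eq_of_le_val_sub h.ge, ← sub_add_sub_cancel f g,
    v.map_add_eq_of_lt_left (h ▸ hlt), h]

/-- Truncating at the least point of `sp f` beyond `v f` leaves an element of `P`. -/
lemma exists_sp_tr_eq_singleton (hf : v f = a) (hγ : γ ∈ T.sp f) (hγa : γ ≠ a) :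
    ∃ γ₀, a < γ₀ ∧ v (f - T.tr f γ₀) = γ₀ ∧ T.sp (T.tr f γ₀) = {a} := by
  have hwf : (T.sp f \ {a}).IsWF := (T.isWF_sp f).mono Set.sdiff_subset
  have hne : (T.sp f \ {a}).Nonempty := ⟨γ, hγ, hγa⟩
  obtain ⟨hmin, hmin_ne⟩ := hwf.min_mem hne
  have ha_lt : a < hwf.min hne :=
    (WithTop.coe_le_coe.1 (hf ▸ val_le_of_mem_sp hmin)).lt_of_ne (Ne.symm hmin_ne)
  refine ⟨hwf.min hne, ha_lt, hmin, ?_⟩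
  rw [sp_tr, Set.eq_singleton_iff_unique_mem]
  refine ⟨⟨mem_sp_of_val_eq hf, ha_lt⟩, fun β ⟨hβ, hβ_lt⟩ => ?_⟩
  by_contra hβa
  exact hwf.not_lt_min hne ⟨hβ, hβa⟩ hβ_lt

lemma le_of_mem_sp_mul (hT : T.SpMulBound) (hf : T.sp f = {a}) (hg : T.sp g ⊆ Set.Iic b)
    (hδ : δ ∈ T.sp (f * g)) : δ ≤ a + b := by
  by_contra! hlt
  have := hT f ⟨a, hf⟩ g (δ - a)
    (fun β hβ => (hg hβ).trans_lt (lt_sub_iff_add_lt'.2 hlt)) δ hδ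
  rw [val_eq_of_sp_eq_singleton hf, ← WithTop.coe_add, add_sub_cancel] at this
  exact lt_irrefl _ this

theorem sp_one (hT : T.SpMulBound) : T.sp 1 = {0} := by
  have hv1 : v 1 = (0 : Γ) := by rw [v.map_one, WithTop.coe_zero]
  refine Set.eq_singleton_iff_unique_mem.2 ⟨mem_sp_of_val_eq hv1, fun γ hγ => ?_⟩
  by_contra hγ0
  obtain ⟨γ₀, hpos, hval, hu⟩ := exists_sp_tr_eq_singleton hv1 hγ hγ0
  set u := T.tr 1 γ₀
  have hvu : v u = (0 : Γ) := val_eq_of_sp_eq_singleton hu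
  have hsq : γ₀ ∈ T.sp (u * u) := by
    refine mem_sp_of_val_sub_eq ?_ (by rw [hu]; exact hpos.ne')
    rw [← mul_sub_one, v.map_mul, ← neg_sub, v.map_neg, hval, hvu, ← WithTop.coe_add, zero_add]
  have := le_of_mem_sp_mul hT hu (hu.trans_subset (Set.singleton_subset_iff.2 Set.self_mem_Iic)) hsq
  exact (add_zero (0 : Γ) ▸ this).not_gt hpos

theorem sp_mul (hT : T.SpMulBound) (hf : T.sp f = {a}) (hg : T.sp g = {b}) :
    T.sp (f * g) = {a + b} := by
  have hv : v (f * g) = (a + b : Γ) := by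
    rw [v.map_mul, val_eq_of_sp_eq_singleton hf, val_eq_of_sp_eq_singleton hg, WithTop.coe_add]
  refine Set.eq_singleton_iff_unique_mem.2 ⟨mem_sp_of_val_eq hv, fun δ hδ => le_antisymm ?_ ?_⟩
  · exact le_of_mem_sp_mul hT hf (hg.trans_subset (Set.singleton_subset_iff.2 Set.self_mem_Iic)) hδ
  · exact WithTop.coe_le_coe.1 (hv ▸ val_le_of_mem_sp hδ)

theorem sp_inv (hT : T.SpMulBound) (hf : T.sp f = {a}) : T.sp f⁻¹ = {-a} := by
  have hvf := val_eq_of_sp_eq_singleton hf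
  have hv : v f⁻¹ = (-a : Γ) := by rw [v.map_inv, hvf, WithTop.LinearOrderedAddCommGroup.coe_neg]
  refine Set.eq_singleton_iff_unique_mem.2 ⟨mem_sp_of_val_eq hv, fun δ hδ => ?_⟩
  by_contra hδa
  obtain ⟨δ₀, hlt, hval, hh⟩ := exists_sp_tr_eq_singleton hv hδ hδa
  set h := T.tr f⁻¹ δ₀
  have hf0 : f ≠ 0 := v.ne_top_iff.1 (hvf ▸ WithTop.coe_ne_top)
  have hpos : 0 < δ₀ + a := neg_lt_iff_pos_add.1 hlt
  have hmem : δ₀ + a ∈ T.sp (h * f) := by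
    refine mem_sp_of_val_sub_eq ?_ (by rw [sp_one hT]; exact hpos.ne')
    rw [← inv_mul_cancel₀ hf0, ← sub_mul, ← neg_sub, neg_mul, v.map_neg, v.map_mul, hval, hvf,
      WithTop.coe_add]
  have := le_of_mem_sp_mul hT hh
    (hf.trans_subset (Set.singleton_subset_iff.2 Set.self_mem_Iic)) hmem
  exact (neg_add_cancel a ▸ this).not_gt hpos

end Truncation

end

theorem stmt_17_general
    (F : Type*) [Field F] (Γ : Type*) [AddCommGroup Γ] [LinearOrder Γ] [IsOrderedAddMonoid Γ]
    (v : F → WithTop Γ)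
    (hv0 : ∀ f : F, v f = ⊤ ↔ f = 0)
    (hvm : ∀ f g : F, v (f * g) = v f + v g)
    (hva : ∀ f g : F, min (v f) (v g) ≤ v (f + g))
    (tr : F → Γ → F)
    (T1 : ∀ (f : F) (α : Γ), (α : WithTop Γ) ≤ v (f - tr f α))
    (T2 : ∀ (f : F) (α : Γ), (α : WithTop Γ) ≤ v f → tr f α = 0)
    (T3 : ∀ (f : F) (α β : Γ), α < β → tr (tr f α) β = tr f α)
    (T4a : ∀ (f g : F) (α : Γ), tr (f + g) α = tr f α + tr g α)
    (T5 : ∀ f : F, {γ : Γ | v (f - tr f γ) = (γ : WithTop Γ)}.IsWF)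
    (hyp : ∀ f : F, (∃ δ : Γ, {γ : Γ | v (f - tr f γ) = (γ : WithTop Γ)} = {δ}) →
      ∀ (g : F) (γ : Γ), (∀ β ∈ {γ' : Γ | v (g - tr g γ') = (γ' : WithTop Γ)}, β < γ) →
        ∀ δ ∈ {γ' : Γ | v (f * g - tr (f * g) γ') = (γ' : WithTop Γ)},
          (δ : WithTop Γ) < v f + (γ : WithTop Γ)) :
    (∃ δ : Γ, {γ : Γ | v ((1 : F) - tr 1 γ) = (γ : WithTop Γ)} = {δ}) ∧
    (∀ f g : F, (∃ δ : Γ, {γ : Γ | v (f - tr f γ) = (γ : WithTop Γ)} = {δ}) →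
      (∃ δ : Γ, {γ : Γ | v (g - tr g γ) = (γ : WithTop Γ)} = {δ}) →
      ∃ δ : Γ, {γ : Γ | v (f * g - tr (f * g) γ) = (γ : WithTop Γ)} = {δ}) ∧
    (∀ f : F, (∃ δ : Γ, {γ : Γ | v (f - tr f γ) = (γ : WithTop Γ)} = {δ}) →
      ∃ δ : Γ, {γ : Γ | v (f⁻¹ - tr f⁻¹ γ) = (γ : WithTop Γ)} = {δ}) := by
  have hv1 : v 1 = 0 :=
    WithTop.eq_zero_of_eq_add_self (fun h => one_ne_zero ((hv0 1).1 h)) (by rw [← hvm, one_mul])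
  let T : Truncation (AddValuation.of v ((hv0 0).2 rfl) hv1 hva hvm) := ⟨tr, T1, T2, T3, T4a, T5⟩
  exact ⟨⟨0, T.sp_one hyp⟩, fun f g ⟨a, hf⟩ ⟨b, hg⟩ => ⟨a + b, T.sp_mul hyp hf hg⟩,
    fun f ⟨a, hf⟩ => ⟨-a, T.sp_inv hyp hf⟩⟩

theorem stmt_17
    (F : Type*) [Field F] (Γ : Type*) [AddCommGroup Γ] [LinearOrder Γ] [IsOrderedAddMonoid Γ]
    (v : F → WithTop Γ)
    (hv0 : ∀ f : F, v f = ⊤ ↔ f = 0)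
    (hvm : ∀ f g : F, v (f * g) = v f + v g)
    (hva : ∀ f g : F, min (v f) (v g) ≤ v (f + g))
    (C : Subfield F)
    (hC1 : ∀ c ∈ C, c ≠ 0 → v c = 0)
    (hC2 : ∀ f : F, v f = 0 → ∃ c ∈ C, 0 < v (f - c))
    (tr : F → Γ → F)
    (T1 : ∀ (f : F) (α : Γ), (α : WithTop Γ) ≤ v (f - tr f α))
    (T2 : ∀ (f : F) (α : Γ), (α : WithTop Γ) ≤ v f → tr f α = 0)
    (T3 : ∀ (f : F) (α β : Γ), α < β → tr (tr f α) β = tr f α)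
    (T4a : ∀ (f g : F) (α : Γ), tr (f + g) α = tr f α + tr g α)
    (T4s : ∀ c ∈ C, ∀ (f : F) (α : Γ), tr (c * f) α = c * tr f α)
    (T5 : ∀ f : F, {γ : Γ | v (f - tr f γ) = (γ : WithTop Γ)}.IsWF)
    (hyp : ∀ f : F, (∃ δ : Γ, {γ : Γ | v (f - tr f γ) = (γ : WithTop Γ)} = {δ}) →
      ∀ (g : F) (γ : Γ), (∀ β ∈ {γ' : Γ | v (g - tr g γ') = (γ' : WithTop Γ)}, β < γ) →
        ∀ δ ∈ {γ' : Γ | v (f * g - tr (f * g) γ') = (γ' : WithTop Γ)},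
          (δ : WithTop Γ) < v f + (γ : WithTop Γ)) :
    (∃ δ : Γ, {γ : Γ | v ((1 : F) - tr 1 γ) = (γ : WithTop Γ)} = {δ}) ∧
    (∀ f g : F, (∃ δ : Γ, {γ : Γ | v (f - tr f γ) = (γ : WithTop Γ)} = {δ}) →
      (∃ δ : Γ, {γ : Γ | v (g - tr g γ) = (γ : WithTop Γ)} = {δ}) →
      ∃ δ : Γ, {γ : Γ | v (f * g - tr (f * g) γ) = (γ : WithTop Γ)} = {δ}) ∧
    (∀ f : F, (∃ δ : Γ, {γ : Γ | v (f - tr f γ) = (γ : WithTop Γ)} = {δ}) →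
      ∃ δ : Γ, {γ : Γ | v (f⁻¹ - tr f⁻¹ γ) = (γ : WithTop Γ)} = {δ}) :=
  stmt_17_general F Γ v hv0 hvm hva tr T1 T2 T3 T4a T5 hyp
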